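/- arXiv:2405.16592 — 2 statements merged into one kernel-verified Lean document; each statement's English description precedes it below -/
import Mathlib

section
/- Let n be a natural number and let a : ℕ → ℕ be a finitely supported function satisfying a(0) = a(1) = a(2) = 0, ∑_{i} a(i) = n + 2, and ∑_{i} i · a(i) = 4n. Then a(3) ≥ 8. -/
/-!
Writing `a i` for the number of `i`-gons, the two counts give `∑ (4 - i) a(i) = 8`. Only the
terms with `i < 4` can be positive, and with no monogons or bigons the sole such term is `a 3`.
-/

open Finset

lemma sum_sub_mul_eq (s : Finset ℕ) (a : ℕ → ℕ) (k : ℕ) :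
    ∑ i ∈ s, ((k : ℤ) - i) * a i = k * ∑ i ∈ s, (a i : ℤ) - ∑ i ∈ s, (i * a i : ℤ) := by
  rw [mul_sum, ← sum_sub_distrib]
  exact sum_congr rfl fun i _ => by ring

lemma sum_support_sub_mul_le_sum_range (a : ℕ →₀ ℕ) (k : ℕ) :
    ∑ i ∈ a.support, ((k : ℤ) - i) * a i ≤ ∑ i ∈ range k, ((k : ℤ) - i) * a i := by
  set f : ℕ → ℤ := fun i => ((k : ℤ) - i) * a i
  have hsupport : ∑ i ∈ a.support, f i = ∑ i ∈ a.support ∪ range k, f i :=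
    sum_subset subset_union_left fun i _ hi => by simp [f, Finsupp.notMem_support_iff.mp hi]
  have htail : ∑ i ∈ (a.support ∪ range k) \ range k, f i ≤ 0 := by
    refine sum_nonpos fun i hi => ?_
    have hki : (k : ℤ) ≤ i := by
      exact_mod_cast not_lt.mp (mem_range.not.mp (mem_sdiff.mp hi).2)
    exact mul_nonpos_of_nonpos_of_nonneg (by linarith) (by positivity)
  rw [hsupport, ← sum_sdiff subset_union_right]
  linarith

theorem triangular_regions_count (n : ℕ) (a : ℕ →₀ ℕ)
    (h0 : a 0 = 0) (h1 : a 1 = 0) (h2 : a 2 = 0)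
    (hsum : ∑ i ∈ a.support, a i = n + 2)
    (hwsum : ∑ i ∈ a.support, i * a i = 4 * n) :
    8 ≤ a 3 := by
  have hsumℤ : ∑ i ∈ a.support, (a i : ℤ) = n + 2 := by exact_mod_cast hsum
  have hwsumℤ : ∑ i ∈ a.support, (i * a i : ℤ) = 4 * n := by exact_mod_cast hwsum
  have : (8 : ℤ) ≤ a 3 :=
    calc (8 : ℤ) = ∑ i ∈ a.support, ((4 : ℕ) - (i : ℤ)) * a i := by
          rw [sum_sub_mul_eq, hsumℤ, hwsumℤ]; push_cast; ring
      _ ≤ ∑ i ∈ range 4, ((4 : ℕ) - (i : ℤ)) * a i := sum_support_sub_mul_le_sum_range a 4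
      _ = a 3 := by simp [sum_range_succ, h0, h1, h2]
  exact_mod_cast this
end

section
/- Let k be a field and let y₁, y₂, y₃ ∈ k be such that y₁, y₂, y₃ are all nonzero. Define F₁ = 1 + y₂ + y₂y₃, F₂ = 1 + y₃ + y₁y₃, F₃ = 1 + y₁ + y₁y₂, and assume F₁, F₂, F₃ are all nonzero. Then the following three identities hold in k: (1) 1 + F₁/(y₃F₃) + (F₁/(y₃F₃))·(F₂/(y₁F₁)) = F₂/(y₁y₃); (2) 1 + F₂/(y₁F₁) + (F₂/(y₁F₁))·(F₃/(y₂F₂)) = F₃/(y₁y₂); (3) 1 + F₃/(y₂F₂) + (F₃/(y₂F₂))·(F₁/(y₃F₃)) = F₁/(y₂y₃). -/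
/-!
Clearing denominators, each identity becomes the polynomial relation
`y₁ y₃ F₃ + y₁ F₁ + F₂ = F₂ F₃`, or one of its images under the cyclic substitution
`y₁ ↦ y₂ ↦ y₃ ↦ y₁`, which permutes `F₁ ↦ F₂ ↦ F₃ ↦ F₁`.
-/

theorem one_add_div_add_div_mul_div_eq_div {k : Type*} [Field k] {a c A B C : k}
    (ha : a ≠ 0) (hc : c ≠ 0) (hA : A ≠ 0) (hC : C ≠ 0)
    (h : a * c * C + a * A + B = B * C) :
    1 + A / (c * C) + A / (c * C) * (B / (a * A)) = B / (a * c) := by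
  field_simp
  linear_combination h

theorem F_cyclic_relation {k : Type*} [CommRing k] {y₁ y₂ y₃ F₁ F₂ F₃ : k}
    (hF₁ : F₁ = 1 + y₂ + y₂ * y₃) (hF₂ : F₂ = 1 + y₃ + y₃ * y₁)
    (hF₃ : F₃ = 1 + y₁ + y₁ * y₂) :
    y₁ * y₃ * F₃ + y₁ * F₁ + F₂ = F₂ * F₃ := by
  subst hF₁ hF₂ hF₃
  ring

theorem phi_of_Fbar {k : Type*} [Field k] (y₁ y₂ y₃ : k)
    (hy₁ : y₁ ≠ 0) (hy₂ : y₂ ≠ 0) (hy₃ : y₃ ≠ 0)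
    (F₁ F₂ F₃ : k)
    (hF₁ : F₁ = 1 + y₂ + y₂ * y₃)
    (hF₂ : F₂ = 1 + y₃ + y₁ * y₃)
    (hF₃ : F₃ = 1 + y₁ + y₁ * y₂)
    (hF₁0 : F₁ ≠ 0) (hF₂0 : F₂ ≠ 0) (hF₃0 : F₃ ≠ 0) :
    1 + F₁ / (y₃ * F₃) + (F₁ / (y₃ * F₃)) * (F₂ / (y₁ * F₁)) = F₂ / (y₁ * y₃) ∧
    1 + F₂ / (y₁ * F₁) + (F₂ / (y₁ * F₁)) * (F₃ / (y₂ * F₂)) = F₃ / (y₁ * y₂) ∧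
    1 + F₃ / (y₂ * F₂) + (F₃ / (y₂ * F₂)) * (F₁ / (y₃ * F₃)) = F₁ / (y₂ * y₃) := by
  have hF₂' : F₂ = 1 + y₃ + y₃ * y₁ := by rw [hF₂, mul_comm y₁]
  refine ⟨?_, ?_, ?_⟩
  · exact one_add_div_add_div_mul_div_eq_div hy₁ hy₃ hF₁0 hF₃0 (F_cyclic_relation hF₁ hF₂' hF₃)
  · rw [mul_comm y₁ y₂]
    exact one_add_div_add_div_mul_div_eq_div hy₂ hy₁ hF₂0 hF₁0 (F_cyclic_relation hF₂' hF₃ hF₁)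
  · rw [mul_comm y₂ y₃]
    exact one_add_div_add_div_mul_div_eq_div hy₃ hy₂ hF₃0 hF₂0 (F_cyclic_relation hF₃ hF₁ hF₂')
end
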